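/- arXiv:1612.02962 — 5 statements merged into one kernel-verified Lean document; each statement's English description precedes it below -/
import Mathlib

section
/- In the Random Admission Policy (RAP) algorithm, when the table is full, a single update step can never decrease the minimum counter value: for every RAP state whose monitored set C has exactly M elements, every arriving item x, and every Boolean admission decision, the minimum of the counter values over the monitored set in the resulting state is greater than or equal to the minimum of the counter values over the monitored set in the original state. -/
/-- A state of the RAP algorithm: a finite set `C` of monitored item
identifiers together with a counter value for each item. -/
structure RAPState where
  C : Finset ℕ
  c : ℕ → ℕ

/-- One deterministic RAP step with table size `M`, arriving item `x` and an
explicit Boolean admission decision `b` used in the full-table case. -/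
noncomputable def rapStep (M : ℕ) (s : RAPState) (x : ℕ) (b : Bool) : RAPState :=
  if x ∈ s.C then
    { C := s.C, c := Function.update s.c x (s.c x + 1) }
  else if s.C.card < M then
    { C := insert x s.C, c := Function.update s.c x 1 }
  else if h : s.C.Nonempty then
    if b then
      let m := Classical.choose (s.C.exists_min_image s.c h)
      { C := insert x (s.C.erase m), c := Function.update s.c x (s.c m + 1) }
    else s
  else s

/-- The minimum counter value over the monitored set (0 if the set is empty). -/
noncomputable def minVal (s : RAPState) : ℕ :=
  sInf (s.c '' (s.C : Set ℕ))

theorem minVal_le {s : RAPState} {y : ℕ} (hy : y ∈ s.C) : minVal s ≤ s.c y :=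
  Nat.sInf_le ⟨y, hy, rfl⟩

theorem minVal_le_minVal_of_forall_exists_le {s t : RAPState} (ht : t.C.Nonempty)
    (h : ∀ y ∈ t.C, ∃ z ∈ s.C, s.c z ≤ t.c y) : minVal s ≤ minVal t := by
  obtain ⟨y₀, hy₀⟩ := ht
  refine le_csInf ⟨t.c y₀, y₀, hy₀, rfl⟩ ?_
  rintro _ ⟨y, hy, rfl⟩
  obtain ⟨z, hz, hzy⟩ := h y hy
  exact (minVal_le hz).trans hzy

theorem minVal_le_minVal_increment (s : RAPState) {x : ℕ} (hx : x ∈ s.C) :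
    minVal s ≤ minVal ⟨s.C, Function.update s.c x (s.c x + 1)⟩ :=
  minVal_le_minVal_of_forall_exists_le ⟨x, hx⟩ fun y hy =>
    ⟨y, hy, le_update_self_iff.mpr (Nat.le_succ _) y⟩

theorem minVal_le_minVal_evict (s : RAPState) {x m : ℕ} (hx : x ∉ s.C) (hm : m ∈ s.C) :
    minVal s ≤ minVal ⟨insert x (s.C.erase m), Function.update s.c x (s.c m + 1)⟩ := by
  refine minVal_le_minVal_of_forall_exists_le (Finset.insert_nonempty _ _) fun y hy => ?_
  rcases Finset.mem_insert.mp hy with rfl | hy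
  · exact ⟨m, hm, by simp⟩
  · have hyC := Finset.mem_of_mem_erase hy
    have hyx : y ≠ x := fun h => hx (h ▸ hyC)
    exact ⟨y, hyC, by simp [hyx]⟩

/-- When the table is full, a single RAP update step can never decrease the
minimum counter value over the monitored set. -/
theorem rapStep_minVal_mono (M : ℕ) (s : RAPState) (hfull : s.C.card = M)
    (x : ℕ) (b : Bool) :
    minVal s ≤ minVal (rapStep M s x b) := by
  unfold rapStep
  split_ifs with hx _ hne
  · exact minVal_le_minVal_increment s hx
  · omega
  · exact minVal_le_minVal_evict s hx
      (Classical.choose_spec (s.C.exists_min_image s.c hne)).1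
  all_goals exact le_rfl
end

section
/- Deterministic over-estimation bound for RAP (Theorem 3 of the paper): start RAP with table size M from the empty state, process any finite stream of items with any sequence of Boolean admission decisions, and let the final state have monitored set C and counters c. For every item x, the RAP estimate f̂_x of x (equal to c_x if x ∈ C and 0 otherwise) satisfies f̂_x ≤ f_x + m, where f_x is the number of occurrences of x in the stream and m is the minimum counter value over C in the final state (taken as 0 if C is empty). -/
def rapInit : RAPState := { C := ∅, c := fun _ => 0 }

noncomputable def rapRun (M : ℕ) (events : List (ℕ × Bool)) : RAPState :=
  events.foldl (fun s e => rapStep M s e.1 e.2) rapInit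

def estimate (s : RAPState) (x : ℕ) : ℕ :=
  if x ∈ s.C then s.c x else 0

/-!
Space-Saving style argument. Let the slack of a state be `0` while the table is not full
and the minimum counter otherwise. Invariant: every monitored counter is at most the
true frequency plus the slack. Before the table fills nothing is evicted, so counters are
exact; an admitted item receives `min + 1`, which is at most its frequency plus the old
minimum; and once the table is full its size never drops and the minimum never decreases,
so the slack only grows.
-/

namespace RAPState

variable {M : ℕ} {s t : RAPState} {f g : ℕ → ℕ} {y : ℕ}

theorem minVal_le {z : ℕ} (hz : z ∈ s.C) : minVal s ≤ s.c z :=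
  Nat.sInf_le ⟨z, hz, rfl⟩

theorem le_minVal (hne : s.C.Nonempty) {k : ℕ} (hk : ∀ z ∈ s.C, k ≤ s.c z) :
    k ≤ minVal s := by
  obtain ⟨z, hz, hval⟩ := Nat.sInf_mem ((Finset.coe_nonempty.mpr hne).image s.c)
  rw [minVal, ← hval]
  exact hk z hz

noncomputable def slack (M : ℕ) (s : RAPState) : ℕ :=
  if s.C.card < M then 0 else minVal s

theorem slack_le_minVal : slack M s ≤ minVal s := by
  unfold slack
  split_ifs <;> simp

theorem slack_le_slack (hcard : s.C.card ≤ t.C.card) (hne : t.C.Nonempty)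
    (hmin : ∀ z ∈ t.C, minVal s ≤ t.c z) : slack M s ≤ slack M t := by
  unfold slack
  split_ifs
  · exact le_rfl
  · exact Nat.zero_le _
  · omega
  · exact le_minVal hne hmin

def BoundedBy (M : ℕ) (f : ℕ → ℕ) (s : RAPState) : Prop :=
  ∀ x ∈ s.C, s.c x ≤ f x + slack M s

theorem BoundedBy.mono (h : BoundedBy M f s) (hfg : f ≤ g) : BoundedBy M g s :=
  fun x hx => (h x hx).trans (by gcongr; exact hfg x)

theorem boundedBy_rapInit : BoundedBy M f rapInit := by
  simp [BoundedBy, rapInit]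

theorem BoundedBy.rapStep_of_mem (h : BoundedBy M f s) (hy : y ∈ s.C) (b : Bool) :
    BoundedBy M (f + Pi.single y 1) (rapStep M s y b) := by
  rw [rapStep, if_pos hy]
  have hslack : slack M s ≤ slack M ⟨s.C, Function.update s.c y (s.c y + 1)⟩ := by
    refine slack_le_slack le_rfl ⟨y, hy⟩ fun z hz => (minVal_le (s := s) hz).trans ?_
    rcases eq_or_ne z y with rfl | hzy <;> simp [*]
  intro x hx
  have := h x hx
  rcases eq_or_ne x y with rfl | hxy
  · simp only [Function.update_self, Pi.add_apply, Pi.single_eq_same] at hslack ⊢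
    omega
  · simp only [Function.update_of_ne hxy, Pi.add_apply, Pi.single_eq_of_ne hxy] at hslack ⊢
    omega

theorem BoundedBy.rapStep_of_card_lt (h : BoundedBy M f s) (hy : y ∉ s.C)
    (hcard : s.C.card < M) (b : Bool) :
    BoundedBy M (f + Pi.single y 1) (rapStep M s y b) := by
  rw [rapStep, if_neg hy, if_pos hcard]
  intro x hx
  rcases eq_or_ne x y with rfl | hxy
  · simp only [Function.update_self, Pi.add_apply, Pi.single_eq_same]
    omega
  · have hx' : x ∈ s.C := Finset.mem_of_mem_insert_of_ne hx hxy
    have := h x hx'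
    simp only [slack, if_pos hcard] at this
    simp only [Function.update_of_ne hxy, Pi.add_apply, Pi.single_eq_of_ne hxy]
    omega

theorem BoundedBy.rapStep_of_admit (h : BoundedBy M f s) (hy : y ∉ s.C)
    (hcard : ¬s.C.card < M) (hne : s.C.Nonempty) :
    BoundedBy M (f + Pi.single y 1) (rapStep M s y true) := by
  rw [rapStep, if_neg hy, if_neg hcard, dif_pos hne, if_pos rfl]
  obtain ⟨hmC, hmin⟩ := Classical.choose_spec (s.C.exists_min_image s.c hne)
  set m := Classical.choose (s.C.exists_min_image s.c hne)
  set t : RAPState := ⟨insert y (s.C.erase m), Function.update s.c y (s.c m + 1)⟩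
  have hcm : s.c m = minVal s := le_antisymm (le_minVal hne hmin) (minVal_le hmC)
  have hcard_t : t.C.card = s.C.card := by
    rw [Finset.card_insert_of_notMem (fun h => hy (Finset.mem_of_mem_erase h)),
      Finset.card_erase_of_mem hmC, Nat.sub_add_cancel (Finset.card_pos.mpr hne)]
  have hold : ∀ z ∈ t.C, z ≠ y → z ∈ s.C ∧ t.c z = s.c z := fun z hz hzy =>
    ⟨Finset.mem_of_mem_erase (Finset.mem_of_mem_insert_of_ne hz hzy),
      Function.update_of_ne hzy _ _⟩
  have hslack : slack M s ≤ slack M t := by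
    refine slack_le_slack hcard_t.ge (Finset.insert_nonempty _ _) fun z hz => ?_
    rcases eq_or_ne z y with rfl | hzy
    · simp [t, hcm]
    · obtain ⟨hz', hcz⟩ := hold z hz hzy
      exact hcz ▸ minVal_le hz'
  have hslack_s : slack M s = minVal s := if_neg hcard
  change BoundedBy M (f + Pi.single y 1) t
  intro x hx
  rcases eq_or_ne x y with rfl | hxy
  · have hcx : t.c x = s.c m + 1 := Function.update_self ..
    rw [hcx, Pi.add_apply, Pi.single_eq_same]
    omega
  · obtain ⟨hx', hcx⟩ := hold x hx hxy
    have := h x hx'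
    simp only [hcx, Pi.add_apply, Pi.single_eq_of_ne hxy]
    omega

theorem BoundedBy.rapStep (h : BoundedBy M f s) (y : ℕ) (b : Bool) :
    BoundedBy M (f + Pi.single y 1) (rapStep M s y b) := by
  by_cases hy : y ∈ s.C
  · exact h.rapStep_of_mem hy b
  by_cases hcard : s.C.card < M
  · exact h.rapStep_of_card_lt hy hcard b
  have hle : f ≤ f + Pi.single y 1 := le_self_add
  by_cases hne : s.C.Nonempty
  · cases b
    · simpa [_root_.rapStep, hy, hcard, hne] using h.mono hle
    · exact h.rapStep_of_admit hy hcard hne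
  · simpa [_root_.rapStep, hy, hcard, hne] using h.mono hle

end RAPState

open RAPState

theorem boundedBy_rapRun (M : ℕ) (events : List (ℕ × Bool)) :
    BoundedBy M (fun x => (events.map Prod.fst).count x) (rapRun M events) := by
  induction events using List.reverseRecOn with
  | nil => exact boundedBy_rapInit
  | append_singleton l e ih =>
    have hcount : (fun x => ((l ++ [e]).map Prod.fst).count x)
        = (fun x => (l.map Prod.fst).count x) + Pi.single e.1 1 := by
      funext x
      simp [List.count_append, List.count_singleton', Pi.single_apply, eq_comm]
    rw [rapRun, List.foldl_append, hcount]
    exact ih.rapStep e.1 e.2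

/-- Deterministic over-estimation bound for RAP: after processing any finite
stream (with any admission decisions) from the empty state, the estimate of
every item `x` is at most its true frequency plus the minimum counter value of
the final state. -/
theorem rap_overestimation (M : ℕ) (events : List (ℕ × Bool)) (x : ℕ) :
    estimate (rapRun M events) x ≤
      (events.map Prod.fst).count x + minVal (rapRun M events) := by
  unfold estimate
  split_ifs with hx
  · exact (boundedBy_rapRun M events x hx).trans (by gcongr; exact slack_le_minVal)
  · exact Nat.zero_le _
end

section
/- RAP' second constraint for heavy-tailed Zipf streams: for every fixed α with 0 < α < 1 and every fixed positive integer k, there exist a real constant c ≥ 1 and an integer D₀ such that for all integers D ≥ D₀, setting P = D^{(α² − α)/(1+α)} and m = ⌈c · k · D^{(1−α)/(1+α)}⌉, one has k + k^α ( Γ_α(m) − Γ_α(k) + P · Γ_α(D) ) < m. -/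
/-!
Comparing the sum with `∫ x ^ (-α)` gives `Γ_α(n) ≤ n ^ (1 - α) / (1 - α)`. With
`β = (1 - α) / (1 + α)`, the exponent of `P` is exactly the one making `P · Γ_α(D) ≤ D ^ β / (1 - α)`,
so `k + k ^ α · P · Γ_α(D) ≤ (1 + 1 / (1 - α)) k D ^ β`, which is at most `m / 2` for
`c = 2 (1 + 1 / (1 - α))`. The remaining term `k ^ α Γ_α(m) ≤ k ^ α m ^ (1 - α) / (1 - α)` is `o(m)`,
hence below `m / 2` once `D`, and with it `m`, is large.
-/

/-- `zipfGamma α n = Σ_{i=1}^{n} i^(-α)`. -/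
noncomputable def zipfGamma (α : ℝ) (n : ℕ) : ℝ :=
  ∑ i ∈ Finset.Icc 1 n, (i : ℝ) ^ (-α)

open Filter

lemma zipfGamma_nonneg (α : ℝ) (n : ℕ) : 0 ≤ zipfGamma α n :=
  Finset.sum_nonneg fun i _ => Real.rpow_nonneg i.cast_nonneg _

lemma zipfGamma_succ_eq_one_add_sum (α : ℝ) (n : ℕ) :
    zipfGamma α (n + 1) = 1 + ∑ i ∈ Finset.range n, ((1 : ℝ) + ↑(i + 1)) ^ (-α) := by
  rw [zipfGamma, ← Finset.Ico_add_one_right_eq_Icc, Finset.sum_Ico_eq_sum_range,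
    Nat.add_sub_cancel, Finset.sum_range_succ']
  push_cast
  rw [Real.one_rpow, add_comm]

lemma zipfGamma_le_rpow_div (α : ℝ) (h0 : 0 ≤ α) (h1 : α < 1) (n : ℕ) :
    zipfGamma α n ≤ (n : ℝ) ^ (1 - α) / (1 - α) := by
  have h1α : 0 < 1 - α := by linarith
  obtain _ | n := n
  · simp [zipfGamma, Real.zero_rpow h1α.ne']
  have hanti : AntitoneOn (fun x : ℝ => x ^ (-α)) (Set.Icc 1 (1 + n)) :=
    fun x hx y _ hxy => Real.rpow_le_rpow_of_nonpos (by linarith [hx.1]) hxy (by linarith)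
  have hint : ∫ x in (1 : ℝ)..1 + n, x ^ (-α) = (((n + 1 : ℕ) : ℝ) ^ (1 - α) - 1) / (1 - α) := by
    rw [integral_rpow (Or.inl (by linarith)), Real.one_rpow, show -α + 1 = 1 - α by ring]
    push_cast; ring_nf
  have hsum := hanti.sum_le_integral
  rw [hint] at hsum
  rw [zipfGamma_succ_eq_one_add_sum]
  have : (1 : ℝ) ≤ 1 / (1 - α) := by rw [le_div_iff₀ h1α]; linarith
  calc _ ≤ 1 + (((n + 1 : ℕ) : ℝ) ^ (1 - α) - 1) / (1 - α) := by linarith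
    _ ≤ _ := by rw [sub_div]; linarith

lemma rpow_mul_zipfGamma_le (α : ℝ) (h0 : 0 ≤ α) (h1 : α < 1) (D : ℕ) :
    (D : ℝ) ^ ((α ^ 2 - α) / (1 + α)) * zipfGamma α D ≤
      (D : ℝ) ^ ((1 - α) / (1 + α)) / (1 - α) := by
  rcases D.eq_zero_or_pos with rfl | hD
  · simpa [zipfGamma] using div_nonneg (Real.rpow_nonneg le_rfl _) (by linarith)
  have hD : (0 : ℝ) < D := by exact_mod_cast hD
  calc (D : ℝ) ^ ((α ^ 2 - α) / (1 + α)) * zipfGamma α D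
      ≤ (D : ℝ) ^ ((α ^ 2 - α) / (1 + α)) * ((D : ℝ) ^ (1 - α) / (1 - α)) := by
        gcongr; exact zipfGamma_le_rpow_div α h0 h1 D
    _ = (D : ℝ) ^ ((α ^ 2 - α) / (1 + α) + (1 - α)) / (1 - α) := by
        rw [Real.rpow_add hD, mul_div_assoc]
    _ = _ := by congr 2; field_simp; ring

lemma eventually_mul_rpow_lt_self {α : ℝ} (hα : 0 < α) (A : ℝ) :
    ∀ᶠ x : ℝ in atTop, A * x ^ (1 - α) < x := by
  filter_upwards [(tendsto_rpow_atTop hα).eventually_gt_atTop A, eventually_gt_atTop 0]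
    with x hxA hx
  calc A * x ^ (1 - α) < x ^ α * x ^ (1 - α) := by gcongr
    _ = x := by rw [← Real.rpow_add hx, add_sub_cancel, Real.rpow_one]

lemma tendsto_natCeil_mul_rpow_atTop {a β : ℝ} (ha : 0 < a) (hβ : 0 < β) :
    Tendsto (fun D : ℕ => (⌈a * (D : ℝ) ^ β⌉₊ : ℝ)) atTop atTop :=
  tendsto_atTop_mono (fun _ => Nat.le_ceil _)
    (((tendsto_rpow_atTop hβ).comp tendsto_natCast_atTop_atTop).const_mul_atTop ha)

lemma add_rpow_mul_zipfGamma_lt {α : ℝ} (h0 : 0 < α) (h1 : α < 1) {k D m : ℕ}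
    (hk : 1 ≤ k) (hD : 1 ≤ D)
    (hm : 2 * (1 + 1 / (1 - α)) * k * (D : ℝ) ^ ((1 - α) / (1 + α)) ≤ m)
    (hbig : 2 * (k : ℝ) ^ α / (1 - α) * (m : ℝ) ^ (1 - α) < m) :
    (k : ℝ) + (k : ℝ) ^ α * (zipfGamma α m - zipfGamma α k +
      (D : ℝ) ^ ((α ^ 2 - α) / (1 + α)) * zipfGamma α D) < m := by
  have h1α : 0 < 1 - α := by linarith
  set y := (D : ℝ) ^ ((1 - α) / (1 + α))
  have hk1 : (1 : ℝ) ≤ k := by exact_mod_cast hk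
  have hy : 1 ≤ y := Real.one_le_rpow (by exact_mod_cast hD) (div_pos h1α (by linarith)).le
  have hkα : (k : ℝ) ^ α ≤ k := Real.rpow_le_self_of_one_le hk1 h1.le
  have hΓ : zipfGamma α m - zipfGamma α k + (D : ℝ) ^ ((α ^ 2 - α) / (1 + α)) * zipfGamma α D
      ≤ (m : ℝ) ^ (1 - α) / (1 - α) + y / (1 - α) := by
    linarith [zipfGamma_le_rpow_div α h0.le h1 m, zipfGamma_nonneg α k,
      rpow_mul_zipfGamma_le α h0.le h1 D]
  calc (k : ℝ) + (k : ℝ) ^ α * (zipfGamma α m - zipfGamma α k +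
        (D : ℝ) ^ ((α ^ 2 - α) / (1 + α)) * zipfGamma α D)
      ≤ k * y + (k : ℝ) ^ α * ((m : ℝ) ^ (1 - α) / (1 - α)) + k * (y / (1 - α)) := by
        have := mul_le_mul_of_nonneg_left hΓ (Real.rpow_nonneg (Nat.cast_nonneg k) α)
        have : (k : ℝ) ^ α * (y / (1 - α)) ≤ k * (y / (1 - α)) := by gcongr
        have : (k : ℝ) ≤ k * y := le_mul_of_one_le_right (Nat.cast_nonneg k) hy
        linarith
    _ < m := by
        have : (k : ℝ) ^ α * ((m : ℝ) ^ (1 - α) / (1 - α)) =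
            2 * (k : ℝ) ^ α / (1 - α) * (m : ℝ) ^ (1 - α) / 2 := by ring
        have : k * y + k * (y / (1 - α)) = 2 * (1 + 1 / (1 - α)) * k * y / 2 := by ring
        linarith

/-- RAP' second constraint for heavy-tailed Zipf streams: for fixed
`0 < α < 1` and fixed `k`, there exist `c ≥ 1` and `D₀` such that for all
`D ≥ D₀`, setting `P = D^((α² - α)/(1+α))` and `m = ⌈c·k·D^((1-α)/(1+α))⌉`,
one has `k + k^α (Γ_α(m) - Γ_α(k) + P·Γ_α(D)) < m`. -/
theorem rapPrime_second_constraint (α : ℝ) (h0 : 0 < α) (h1 : α < 1)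
    (k : ℕ) (hk : 0 < k) :
    ∃ c : ℝ, 1 ≤ c ∧ ∃ D₀ : ℕ, ∀ D : ℕ, D₀ ≤ D →
      (k : ℝ) + (k : ℝ) ^ α *
          (zipfGamma α ⌈c * (k : ℝ) * (D : ℝ) ^ ((1 - α) / (1 + α))⌉₊ -
            zipfGamma α k +
            (D : ℝ) ^ ((α ^ 2 - α) / (1 + α)) * zipfGamma α D) <
        (⌈c * (k : ℝ) * (D : ℝ) ^ ((1 - α) / (1 + α))⌉₊ : ℝ) := by
  have hC : 0 < 1 / (1 - α) := one_div_pos.mpr (by linarith)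
  refine ⟨2 * (1 + 1 / (1 - α)), by linarith, ?_⟩
  have hm := tendsto_natCeil_mul_rpow_atTop (a := 2 * (1 + 1 / (1 - α)) * k)
    (by positivity) (div_pos (by linarith) (by linarith) : 0 < (1 - α) / (1 + α))
  obtain ⟨D₀, hD₀⟩ := eventually_atTop.mp <|
    (hm.eventually (eventually_mul_rpow_lt_self h0 (2 * (k : ℝ) ^ α / (1 - α)))).and
      (eventually_ge_atTop 1)
  exact ⟨D₀, fun D hD => add_rpow_mul_zipfGamma_lt h0 h1 hk (hD₀ D hD).2 (Nat.le_ceil _)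
    (hD₀ D hD).1⟩
end

section
/- Space Saving requirement is Ω(D^{1−α}) on heavy-tailed Zipf streams (the negative half of Theorem 1 of the paper): for every fixed α with 0 < α < 1 and every fixed positive integer k, there exist a constant c > 0 and an integer D₀ such that for all integers D ≥ D₀, every integer m > k satisfying the Space Saving convergence condition f_k > (1 − F_k)/(m − k) for the Zipf distribution with skew α over {1,…,D} must satisfy m ≥ c · D^{1−α}. -/
open Finset

namespace zipfGamma

variable {α : ℝ}

theorem pos {n : ℕ} (hn : 0 < n) : 0 < zipfGamma α n :=
  sum_pos (fun i hi => Real.rpow_pos_of_pos (by exact_mod_cast (mem_Icc.mp hi).1) _)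
    ⟨1, mem_Icc.mpr ⟨le_rfl, hn⟩⟩

theorem sub_eq_sum_Ioc {k D : ℕ} (hkD : k ≤ D) :
    zipfGamma α D - zipfGamma α k = ∑ i ∈ Ioc k D, (i : ℝ) ^ (-α) := by
  rw [zipfGamma, zipfGamma, ← zero_add 1, Icc_add_one_left_eq_Ioc, Icc_add_one_left_eq_Ioc,
    ← sum_Ioc_consecutive _ (Nat.zero_le k) hkD, add_sub_cancel_left]

theorem sub_mul_rpow_neg_le_sub (hα : 0 ≤ α) {k D : ℕ} (hkD : k ≤ D) :
    ((D : ℝ) - k) * (D : ℝ) ^ (-α) ≤ zipfGamma α D - zipfGamma α k := by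
  have hterm : ∀ i ∈ Ioc k D, (D : ℝ) ^ (-α) ≤ (i : ℝ) ^ (-α) := fun i hi => by
    obtain ⟨hki, hiD⟩ := mem_Ioc.mp hi
    exact Real.rpow_le_rpow_of_nonpos (by exact_mod_cast k.zero_le.trans_lt hki)
      (by exact_mod_cast hiD) (neg_nonpos.mpr hα)
  have hsum := card_nsmul_le_sum _ _ _ hterm
  rwa [Nat.card_Ioc, nsmul_eq_mul, Nat.cast_sub hkD, ← sub_eq_sum_Ioc hkD] at hsum

theorem rpow_one_sub_div_two_le_sub (hα : 0 ≤ α) {k D : ℕ} (hDpos : 0 < D)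
    (hD : 2 * k ≤ D) :
    (D : ℝ) ^ (1 - α) / 2 ≤ zipfGamma α D - zipfGamma α k := by
  have hDR : (0 : ℝ) < D := by exact_mod_cast hDpos
  have hhalf : (D : ℝ) / 2 ≤ D - k := by
    have : (2 : ℝ) * k ≤ D := by exact_mod_cast hD
    linarith
  calc (D : ℝ) ^ (1 - α) / 2 = (D : ℝ) / 2 * (D : ℝ) ^ (-α) := by
        rw [sub_eq_add_neg, Real.rpow_add hDR, Real.rpow_one]; ring
    _ ≤ ((D : ℝ) - k) * (D : ℝ) ^ (-α) := by gcongr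
    _ ≤ zipfGamma α D - zipfGamma α k := sub_mul_rpow_neg_le_sub hα (by omega)

theorem sub_lt_of_spaceSaving_condition {k D m : ℕ} (hD : 0 < D) (hkm : k < m)
    (H : (k : ℝ) ^ (-α) / zipfGamma α D >
      (1 - zipfGamma α k / zipfGamma α D) / ((m : ℝ) - (k : ℝ))) :
    zipfGamma α D - zipfGamma α k < (k : ℝ) ^ (-α) * ((m : ℝ) - k) := by
  have hG := pos (α := α) hD
  have hmk : (0 : ℝ) < (m : ℝ) - k := sub_pos.mpr (by exact_mod_cast hkm)
  rw [gt_iff_lt, div_lt_div_iff₀ hmk hG, sub_mul, div_mul_cancel₀ _ hG.ne', one_mul] at H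
  exact H

end zipfGamma

theorem spaceSaving_lower_bound_heavyTailed_general (α : ℝ) (h0 : 0 < α)
    (k : ℕ) (hk : 0 < k) :
    ∃ c : ℝ, 0 < c ∧ ∃ D₀ : ℕ, ∀ D : ℕ, D₀ ≤ D → ∀ m : ℕ, k < m →
      (k : ℝ) ^ (-α) / zipfGamma α D >
          (1 - zipfGamma α k / zipfGamma α D) / ((m : ℝ) - (k : ℝ)) →
        (m : ℝ) ≥ c * (D : ℝ) ^ (1 - α) := by
  have hkR : (0 : ℝ) < k := by exact_mod_cast hk
  refine ⟨(k : ℝ) ^ α / 2, by positivity, 2 * k, fun D hD m hkm H => ?_⟩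
  have hDpos : 0 < D := by omega
  have htail := zipfGamma.rpow_one_sub_div_two_le_sub h0.le hDpos hD
  have hcond := zipfGamma.sub_lt_of_spaceSaving_condition hDpos hkm H
  refine le_of_lt ?_
  calc (k : ℝ) ^ α / 2 * (D : ℝ) ^ (1 - α)
      = (k : ℝ) ^ α * ((D : ℝ) ^ (1 - α) / 2) := by ring
    _ ≤ (k : ℝ) ^ α * (zipfGamma α D - zipfGamma α k) := by gcongr
    _ < (k : ℝ) ^ α * ((k : ℝ) ^ (-α) * ((m : ℝ) - k)) := by gcongr
    _ = (m : ℝ) - k := by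
        rw [← mul_assoc, ← Real.rpow_add hkR, add_neg_cancel, Real.rpow_zero, one_mul]
    _ ≤ m := sub_le_self _ hkR.le

/-- Space Saving requirement is `Ω(D^(1-α))` on heavy-tailed Zipf streams: for
fixed `0 < α < 1` and fixed `k`, there exist `c > 0` and `D₀` such that for
all `D ≥ D₀`, every `m > k` satisfying the Space Saving convergence condition
`f_k > (1 - F_k)/(m - k)` satisfies `m ≥ c · D^(1-α)`. -/
theorem spaceSaving_lower_bound_heavyTailed (α : ℝ) (h0 : 0 < α) (h1 : α < 1)
    (k : ℕ) (hk : 0 < k) :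
    ∃ c : ℝ, 0 < c ∧ ∃ D₀ : ℕ, ∀ D : ℕ, D₀ ≤ D → ∀ m : ℕ, k < m →
      (k : ℝ) ^ (-α) / zipfGamma α D >
          (1 - zipfGamma α k / zipfGamma α D) / ((m : ℝ) - (k : ℝ)) →
        (m : ℝ) ≥ c * (D : ℝ) ^ (1 - α) :=
  spaceSaving_lower_bound_heavyTailed_general α h0 k hk
end

section
/- RAP' counter requirement for skew-1 Zipf streams (the positive half of Theorem 2 of the paper): for every fixed positive integer k, there exist a real constant c ≥ 1 and an integer D₀ ≥ 3 such that for all integers D ≥ D₀, setting P = 1/√(ln D) and m = ⌈c · k · √(ln D)⌉, one has 0 < P ≤ 1 and both RAP' constraints hold: m > k · P^{−1} and k + k·( Γ_1(m) − Γ_1(k) + P · Γ_1(D) ) < m. -/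
/-!
With `s = √(ln D)` and `m = ⌈4 k s⌉`, the bound `Γ_1(n) ≤ 1 + ln n` gives
`Γ_1(m) ≤ 1 + ln (5 k s) ≤ ln (5 k) + s` (using `ln s ≤ s - 1`) and
`Γ_1(D) / s ≤ (1 + s²) / s ≤ 1 + s`. Hence the left side of the second constraint is at most
`k (2 + ln (5 k) + 2 s)`, which is below `4 k s ≤ m` as soon as `s > 1 + ln (5 k) / 2`;
since `s → ∞` with `D`, this holds for all large `D`.
-/

open Filter

/-- `harmonic n = Γ_1(n) = Σ_{i=1}^{n} 1/i`, the `n`-th harmonic number. -/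
noncomputable def harmonicSum (n : ℕ) : ℝ :=
  ∑ i ∈ Finset.Icc 1 n, (1 : ℝ) / (i : ℝ)

lemma harmonicSum_eq_harmonic (n : ℕ) : harmonicSum n = ((harmonic n : ℚ) : ℝ) := by
  rw [harmonicSum, harmonic_eq_sum_Icc]
  push_cast
  simp only [one_div]

lemma harmonicSum_nonneg (n : ℕ) : 0 ≤ harmonicSum n :=
  Finset.sum_nonneg fun _ _ => by positivity

lemma harmonicSum_le_one_add_log (n : ℕ) : harmonicSum n ≤ 1 + Real.log n := by
  rw [harmonicSum_eq_harmonic]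
  exact harmonic_le_one_add_log n

section Budget

variable {k : ℕ} {s : ℝ}

lemma harmonicSum_ceil_four_mul_le (hk : 0 < k) (hs : 1 ≤ s) :
    harmonicSum ⌈4 * (k : ℝ) * s⌉₊ ≤ Real.log (5 * k) + s := by
  have hk1 : (1 : ℝ) ≤ k := by exact_mod_cast hk
  set m := ⌈4 * (k : ℝ) * s⌉₊
  have hm_pos : 0 < (m : ℝ) := lt_of_lt_of_le (by positivity) (Nat.le_ceil (4 * (k : ℝ) * s))
  have hm_le : (m : ℝ) ≤ 5 * k * s := by
    have := Nat.ceil_lt_add_one (show 0 ≤ 4 * (k : ℝ) * s by positivity)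
    nlinarith
  calc harmonicSum m ≤ 1 + Real.log m := harmonicSum_le_one_add_log m
    _ ≤ 1 + Real.log (5 * k * s) := by gcongr
    _ = 1 + Real.log (5 * k) + Real.log s := by
        rw [Real.log_mul (by positivity) (by positivity)]; ring
    _ ≤ Real.log (5 * k) + s := by linarith [Real.log_le_sub_one_of_pos (by positivity : 0 < s)]

lemma one_div_mul_le_one_add_of_le_one_add_sq {H : ℝ} (hs : 1 ≤ s) (hH : H ≤ 1 + s ^ 2) :
    1 / s * H ≤ 1 + s := by
  have hs0 : 0 < s := by positivity
  calc 1 / s * H ≤ 1 / s * (1 + s ^ 2) := by gcongr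
    _ = 1 / s + s := by field_simp
    _ ≤ 1 + s := by gcongr; exact (div_le_one hs0).2 hs

lemma rapPrime_budget_lt_ceil {H : ℝ} (hk : 0 < k) (hs : 1 ≤ s)
    (hs_large : 1 + Real.log (5 * k) / 2 < s) (hH : H ≤ 1 + s ^ 2) :
    (k : ℝ) + k * (harmonicSum ⌈4 * (k : ℝ) * s⌉₊ - harmonicSum k + 1 / s * H) <
      ⌈4 * (k : ℝ) * s⌉₊ := by
  have hbracket : harmonicSum ⌈4 * (k : ℝ) * s⌉₊ - harmonicSum k + 1 / s * H ≤
      1 + Real.log (5 * k) + 2 * s := by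
    linarith [harmonicSum_ceil_four_mul_le hk hs, harmonicSum_nonneg k,
      one_div_mul_le_one_add_of_le_one_add_sq hs hH]
  calc (k : ℝ) + k * (harmonicSum ⌈4 * (k : ℝ) * s⌉₊ - harmonicSum k + 1 / s * H)
      ≤ k + k * (1 + Real.log (5 * k) + 2 * s) := by gcongr
    _ = k * (2 + Real.log (5 * k) + 2 * s) := by ring
    _ < k * (4 * s) := by gcongr; linarith
    _ = 4 * k * s := by ring
    _ ≤ ⌈4 * (k : ℝ) * s⌉₊ := Nat.le_ceil _

end Budget

lemma tendsto_sqrt_log_natCast_atTop :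
    Tendsto (fun D : ℕ => Real.sqrt (Real.log D)) atTop atTop :=
  Real.tendsto_sqrt_atTop.comp (Real.tendsto_log_atTop.comp tendsto_natCast_atTop_atTop)

/-- RAP' counter requirement for skew-1 Zipf streams: for fixed `k`, there
exist `c ≥ 1` and `D₀ ≥ 3` such that for all `D ≥ D₀`, setting
`P = 1/√(ln D)` and `m = ⌈c·k·√(ln D)⌉`, one has `0 < P ≤ 1` and both RAP'
constraints hold: `m > k·P⁻¹` and `k + k·(Γ_1(m) - Γ_1(k) + P·Γ_1(D)) < m`. -/
theorem rapPrime_skewOne_requirement (k : ℕ) (hk : 0 < k) :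
    ∃ c : ℝ, 1 ≤ c ∧ ∃ D₀ : ℕ, 3 ≤ D₀ ∧ ∀ D : ℕ, D₀ ≤ D →
      (0 < 1 / Real.sqrt (Real.log D) ∧ 1 / Real.sqrt (Real.log D) ≤ 1) ∧
      (⌈c * (k : ℝ) * Real.sqrt (Real.log D)⌉₊ : ℝ) >
        (k : ℝ) * (1 / Real.sqrt (Real.log D))⁻¹ ∧
      (k : ℝ) + (k : ℝ) *
          (harmonicSum ⌈c * (k : ℝ) * Real.sqrt (Real.log D)⌉₊ -
            harmonicSum k +
            (1 / Real.sqrt (Real.log D)) * harmonicSum D) <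
        (⌈c * (k : ℝ) * Real.sqrt (Real.log D)⌉₊ : ℝ) := by
  obtain ⟨D₀, hD₀⟩ := eventually_atTop.1 <|
    (tendsto_sqrt_log_natCast_atTop.eventually_ge_atTop 1).and
      (tendsto_sqrt_log_natCast_atTop.eventually_gt_atTop (1 + Real.log (5 * k) / 2))
  refine ⟨4, by norm_num, max 3 D₀, le_max_left _ _, fun D hD => ?_⟩
  obtain ⟨hs, hs_large⟩ := hD₀ D (le_of_max_le_right hD)
  set s := Real.sqrt (Real.log D)
  have hs0 : 0 < s := by positivity
  have hH : harmonicSum D ≤ 1 + s ^ 2 := by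
    rw [Real.sq_sqrt (zero_le_one.trans (Real.one_le_sqrt.1 hs))]
    exact harmonicSum_le_one_add_log D
  refine ⟨⟨by positivity, (div_le_one hs0).2 hs⟩, ?_, rapPrime_budget_lt_ceil hk hs hs_large hH⟩
  rw [one_div, inv_inv]
  calc (k : ℝ) * s < 4 * k * s := by linarith [mul_pos (Nat.cast_pos.2 hk : (0 : ℝ) < k) hs0]
    _ ≤ ⌈4 * (k : ℝ) * s⌉₊ := Nat.le_ceil _
end
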